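/- Let T ∈ (ℂ²)^{⊗4} with coordinates T_{ijkl} (i,j,k,l ∈ {1,2}) with respect to the standard basis, and define the linear functional β(T) = −2·T₁₁₂₂ + T₁₂₁₂ + T₁₂₂₁ + T₂₁₁₂ + T₂₁₂₁ − 2·T₂₂₁₁. Then β is SL₂(ℂ)-invariant: for every g ∈ SL₂(ℂ), β(g^{⊗4}·T) = β(T), where g^{⊗4} acts diagonally on the four tensor factors. -/
import Mathlib


/-- The diagonal action of a `2 × 2` matrix `g` on order-4 tensors over `ℂ²`,
written in coordinates: `(g^{⊗4} T)_{i} = Σ_j (Π_p g_{i_p j_p}) T_j`. -/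
noncomputable def act4 (g : Matrix (Fin 2) (Fin 2) ℂ)
    (T : (Fin 4 → Fin 2) → ℂ) : (Fin 4 → Fin 2) → ℂ :=
  fun i => ∑ j : Fin 4 → Fin 2, (∏ p : Fin 4, g (i p) (j p)) * T j

/-- The functional `β(T) = −2T₁₁₂₂ + T₁₂₁₂ + T₁₂₂₁ + T₂₁₁₂ + T₂₁₂₁ − 2T₂₂₁₁`
(written with `0`-based indices) on `(ℂ²)^{⊗4}`. -/
noncomputable def beta31 (T : (Fin 4 → Fin 2) → ℂ) : ℂ :=
  -2 * T ![0, 0, 1, 1] + T ![0, 1, 0, 1] + T ![0, 1, 1, 0] +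
    T ![1, 0, 0, 1] + T ![1, 0, 1, 0] - 2 * T ![1, 1, 0, 0]

/-- Peel off the first coordinate of a sum over `Fin (n+1) → Fin 2`. -/
lemma sum_pi_succ_aux (n : ℕ) (f : (Fin (n+1) → Fin 2) → ℂ) :
    ∑ j, f j = ∑ a : Fin 2, ∑ r : Fin n → Fin 2, f (Fin.cons a r) :=
  calc ∑ j, f j = ∑ p : Fin 2 × (Fin n → Fin 2), f (Fin.cons p.1 p.2) :=
        Fintype.sum_equiv (Fin.consEquiv fun _ => Fin 2).symm _ _ (fun j => by
          simp [Fin.consEquiv, Fin.cons_self_tail])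
    _ = ∑ a : Fin 2, ∑ r : Fin n → Fin 2, f (Fin.cons a r) :=
        Fintype.sum_prod_type (f := fun p => f (Fin.cons p.1 p.2))

/-- A sum over `Fin 4 → Fin 2` as a fourfold sum over `Fin 2`. -/
lemma sum4_aux (f : (Fin 4 → Fin 2) → ℂ) :
    ∑ j : Fin 4 → Fin 2, f j =
      ∑ a : Fin 2, ∑ b : Fin 2, ∑ c : Fin 2, ∑ d : Fin 2, f ![a, b, c, d] := by
  rw [sum_pi_succ_aux]
  congr 1; ext a
  rw [sum_pi_succ_aux]
  congr 1; ext b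
  rw [sum_pi_succ_aux]
  congr 1; ext c
  rw [sum_pi_succ_aux]
  congr 1; ext d
  rw [Fintype.sum_unique]
  congr 1

/-- The functional `β` is `SL₂(ℂ)`-invariant for the diagonal
action `g^{⊗4}` on `(ℂ²)^{⊗4}`. -/
theorem beta31_SL2_invariant (g : Matrix (Fin 2) (Fin 2) ℂ) (hg : g.det = 1)
    (T : (Fin 4 → Fin 2) → ℂ) :
    beta31 (act4 g T) = beta31 T := by
  have h : g 0 0 * g 1 1 - g 0 1 * g 1 0 = 1 := by
    simpa [Matrix.det_fin_two] using hg
  simp only [beta31, act4, sum4_aux, Fin.prod_univ_four, Fin.sum_univ_two,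
    Matrix.cons_val_zero, Matrix.cons_val_one, Matrix.head_cons,
    Matrix.cons_val_two, Matrix.tail_cons, Matrix.cons_val_three]
  linear_combination (g 0 0 * g 1 1 - g 0 1 * g 1 0 + 1) *
    (-2 * T ![0, 0, 1, 1] + T ![0, 1, 0, 1] + T ![0, 1, 1, 0] +
      T ![1, 0, 0, 1] + T ![1, 0, 1, 0] - 2 * T ![1, 1, 0, 0]) * h
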